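/- Let x be a θ-cyclic point with cubic support graph G_x having exactly k critical cuts, and let U be a critical cut of G_x. Then the contracted graph G_x^U has at most k − 1 critical cuts. -/

import Mathlib

open scoped Classical

noncomputable section

namespace TSPPaper

variable {V : Type*} [Fintype V] [DecidableEq V]

/-- The sum of `x` over the edges crossing the cut `U` (each crossing edge counted once). -/
def cutSum (x : Sym2 V → ℝ) (U : Finset V) : ℝ :=
  ∑ u ∈ U, ∑ v ∈ Uᶜ, x s(u, v)

/-- Membership in the subtour elimination polytope `SUBT(K_n)`. -/
def inSUBT (x : Sym2 V → ℝ) : Prop :=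
  (∀ e : Sym2 V, e.IsDiag → x e = 0) ∧
  (∀ e : Sym2 V, 0 ≤ x e) ∧ (∀ e : Sym2 V, x e ≤ 1) ∧
  (∀ v : V, cutSum x {v} = 2) ∧
  (∀ U : Finset V, U.Nonempty → U ≠ Finset.univ → 2 ≤ cutSum x U)

/-- The simple graph underlying the support of a multigraph given by edge multiplicities. -/
def supportGraph (F : Sym2 V → ℕ) : SimpleGraph V where
  Adj u v := u ≠ v ∧ 0 < F s(u, v)
  symm := ⟨fun u v h => ⟨h.1.symm, by rw [Sym2.eq_swap]; exact h.2⟩⟩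
  loopless := ⟨fun u h => h.1 rfl⟩

/-- The support graph of a real edge vector. -/
def suppGraph (x : Sym2 V → ℝ) : SimpleGraph V where
  Adj u v := u ≠ v ∧ 0 < x s(u, v)
  symm := ⟨fun u v h => ⟨h.1.symm, by rw [Sym2.eq_swap]; exact h.2⟩⟩
  loopless := ⟨fun u h => h.1 rfl⟩

/-- Degree of a vertex in a multigraph given by edge multiplicities. -/
def multiDeg (F : Sym2 V → ℕ) (v : V) : ℕ := ∑ u : V, F s(v, u)

/-- A tour: a spanning connected Eulerian multigraph (with no loops). -/
def IsTour (F : Sym2 V → ℕ) : Prop :=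
  (∀ e : Sym2 V, e.IsDiag → F e = 0) ∧
  (∀ v : V, Even (multiDeg F v)) ∧
  (supportGraph F).Connected

/-- A tour using only edges in the support of `x`. -/
def IsTourSupp (x : Sym2 V → ℝ) (F : Sym2 V → ℕ) : Prop :=
  IsTour F ∧ ∀ e : Sym2 V, F e ≠ 0 → 0 < x e

/-- A tour of a (simple) graph `G`. -/
def IsTourOfGraph (G : SimpleGraph V) (F : Sym2 V → ℕ) : Prop :=
  IsTour F ∧ ∀ e : Sym2 V, F e ≠ 0 → e ∈ G.edgeSet

/-- Membership in `TSP(K_n)`: the convex hull of incidence vectors of tours. -/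
def inTSP (y : Sym2 V → ℝ) : Prop :=
  ∃ (k : ℕ) (F : Fin k → Sym2 V → ℕ) (lam : Fin k → ℝ),
    (∀ i, IsTour (F i)) ∧ (∀ i, 0 ≤ lam i) ∧ (∑ i, lam i = 1) ∧
    (∀ e : Sym2 V, y e = ∑ i, lam i * (F i e : ℝ))

/-- number of support edges incident on a vertex -/
def suppDeg (x : Sym2 V → ℝ) (v : V) : ℕ :=
  (Finset.univ.filter fun e : Sym2 V => 0 < x e ∧ v ∈ e).card

/-- A θ-cyclic point. -/
def IsCyclic (θ : ℝ) (x : Sym2 V → ℝ) : Prop :=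
  0 < θ ∧ θ ≤ 1 / 2 ∧ inSUBT x ∧
  (∀ e : Sym2 V, x e = 0 ∨ x e = θ ∨ x e = 1 - θ ∨ x e = 1) ∧
  (∀ v : V, suppDeg x v ≤ 3) ∧
  (∀ v : V, ∃ e : Sym2 V, v ∈ e ∧ x e = 1)

/-- The edges of the complete graph crossing the cut `U`. -/
def crossEdges (U : Finset V) : Finset (Sym2 V) :=
  Finset.univ.filter fun e : Sym2 V => ∃ u v : V, e = s(u, v) ∧ u ∈ U ∧ v ∉ U

/-- The support edges of `x` crossing the cut `U`. -/
def cutEdges (x : Sym2 V → ℝ) (U : Finset V) : Finset (Sym2 V) :=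
  (crossEdges U).filter fun e => 0 < x e

/-- The edges of the graph `G` crossing the cut `U`. -/
def cutEdgesG (G : SimpleGraph V) (U : Finset V) : Finset (Sym2 V) :=
  (crossEdges U).filter fun e => e ∈ G.edgeSet

/-- A critical cut of the support graph of `x`. -/
def IsCriticalCut (x : Sym2 V → ℝ) (U : Finset V) : Prop :=
  2 ≤ U.card ∧ 2 ≤ Uᶜ.card ∧
  (cutEdges x U).card = 3 ∧
  ((cutEdges x U).filter fun e => x e = 1).card = 1 ∧
  ∀ e ∈ cutEdges x U, ∀ f ∈ cutEdges x U, e ≠ f → ∀ w : V, w ∈ e → w ∈ f → False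

/-- Vertex set after contracting the complement of `U` to a single pseudovertex `none`. -/
abbrev Contracted (U : Finset V) := Option {u : V // u ∈ U}

/-- The contraction map sending every vertex outside of `U` to the pseudovertex. -/
def contractMap (U : Finset V) (w : V) : Contracted U :=
  if h : w ∈ U then some ⟨w, h⟩ else none

/-- The point induced on the contracted vertex set (loops are removed). -/
def contractPoint (x : Sym2 V → ℝ) (U : Finset V) : Sym2 (Contracted U) → ℝ :=
  fun d => if d.IsDiag then 0
    else ∑ e ∈ Finset.univ.filter (fun e : Sym2 V => Sym2.map (contractMap U) e = d), x e

/-- The eight allowed patterns, as multiplicity triples on `(e_u, f_u, g_u)`. -/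
def patternOK (a b c : ℕ) : Prop :=
  (a, b, c) = (2, 0, 0) ∨ (a, b, c) = (1, 1, 0) ∨ (a, b, c) = (1, 0, 1) ∨
  (a, b, c) = (2, 2, 0) ∨ (a, b, c) = (2, 0, 2) ∨ (a, b, c) = (2, 1, 1) ∨
  (a, b, c) = (1, 2, 1) ∨ (a, b, c) = (1, 1, 2)

/-- A handpicked tour (of the support of a cyclic point `x`): around every vertex `u` the
multiset of edges of the tour incident on `u` is one of the allowed patterns on the
1-edge and the two fractional edges at `u`. -/
def Handpicked (x : Sym2 V → ℝ) (F : Sym2 V → ℕ) : Prop :=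
  ∀ u : V, ∃ e f g : Sym2 V,
    u ∈ e ∧ u ∈ f ∧ u ∈ g ∧ e ≠ f ∧ e ≠ g ∧ f ≠ g ∧
    x e = 1 ∧ 0 < x f ∧ x f < 1 ∧ 0 < x g ∧ x g < 1 ∧
    (∀ e' : Sym2 V, 0 < x e' → u ∈ e' → e' = e ∨ e' = f ∨ e' = g) ∧
    patternOK (F e) (F f) (F g)

/-- `φ₂(e)`: total weight of the members of the combination in which `e` is doubled. -/
def phi2 {k : ℕ} (lam : Fin k → ℝ) (F : Fin k → Sym2 V → ℕ) (e : Sym2 V) : ℝ :=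
  ∑ i ∈ Finset.univ.filter (fun i : Fin k => F i e = 2), lam i

/-- Frequency of the pattern whose multiplicities on the edges `(e, f, g)` are given by `p`. -/
def patFreq {k : ℕ} (lam : Fin k → ℝ) (F : Fin k → Sym2 V → ℕ)
    (e f g : Sym2 V) (p : ℕ × ℕ × ℕ) : ℝ :=
  ∑ i ∈ Finset.univ.filter (fun i : Fin k => (F i e, F i f, F i g) = p), lam i

/-- The simple graph given by a finite set of edges. -/
def graphOfEdges (T : Finset (Sym2 V)) : SimpleGraph V where
  Adj u v := u ≠ v ∧ s(u, v) ∈ T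
  symm := ⟨fun u v h => ⟨h.1.symm, by rw [Sym2.eq_swap]; exact h.2⟩⟩
  loopless := ⟨fun u h => h.1 rfl⟩

/-- Degree of a vertex in an edge set. -/
def edgeDeg (T : Finset (Sym2 V)) (v : V) : ℕ := (T.filter fun e => v ∈ e).card

/-- A connector of the support graph of `x`: a connected spanning subgraph, no doubled edges. -/
def IsConnector (x : Sym2 V → ℝ) (T : Finset (Sym2 V)) : Prop :=
  (∀ e ∈ T, 0 < x e) ∧ (graphOfEdges T).Connected

/-- `M` is an induced matching of the support graph of `x` consisting of 1-edges. -/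
def IsInducedMatching (x : Sym2 V → ℝ) (M : Finset (Sym2 V)) : Prop :=
  (∀ e ∈ M, x e = 1) ∧
  (∀ e ∈ M, ∀ f ∈ M, e ≠ f → ∀ w : V, w ∈ e → w ∈ f → False) ∧
  (∀ e : Sym2 V, 0 < x e → (∀ w : V, w ∈ e → ∃ f ∈ M, w ∈ f) → e ∈ M)

/-- Property `P(v, M, Λ)` for a convex combination `{lam, T}` of connectors. -/
def PropertyP (x : Sym2 V → ℝ) (v : V) (M : Finset (Sym2 V)) (L : ℝ)
    {k : ℕ} (lam : Fin k → ℝ) (T : Fin k → Finset (Sym2 V)) : Prop :=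
  (∑ i ∈ Finset.univ.filter (fun i : Fin k => edgeDeg (T i) v = 1), lam i) = L ∧
  (∑ i ∈ Finset.univ.filter (fun i : Fin k => edgeDeg (T i) v = 3), lam i) = L ∧
  (∑ i ∈ Finset.univ.filter (fun i : Fin k => edgeDeg (T i) v = 2), lam i) = 1 - 2 * L ∧
  (∀ e ∈ M, ∀ w : V, w ∈ e → ∀ i, edgeDeg (T i) w = 2) ∧
  (∀ i, ((graphOfEdges (T i)).induce {u : V | u ≠ v}).Connected)

/-- An `O`-join of the support graph of `x`. -/
def IsOJoin (x : Sym2 V → ℝ) (O : Finset V) (J : Finset (Sym2 V)) : Prop :=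
  (∀ e ∈ J, 0 < x e) ∧ ∀ v : V, (Odd (edgeDeg J v) ↔ v ∈ O)

/-- An `O`-join of the graph `G`. -/
def IsOJoinOfGraph (G : SimpleGraph V) (O : Finset V) (J : Finset (Sym2 V)) : Prop :=
  (∀ e ∈ J, e ∈ G.edgeSet) ∧ ∀ v : V, (Odd (edgeDeg J v) ↔ v ∈ O)

/-- The support graph, after contracting the complement of `U`, of a multigraph on `V`
whose edges all have an endpoint in `U`. -/
def quotGraph (U : Finset V) (F : Sym2 V → ℕ) : SimpleGraph (Contracted U) where
  Adj a b := a ≠ b ∧ ∃ u v : V, 0 < F s(u, v) ∧ contractMap U u = a ∧ contractMap U v = b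
  symm := ⟨fun a b h => ⟨h.1.symm, by
    obtain ⟨u, v, h1, h2, h3⟩ := h.2
    exact ⟨v, u, by rw [Sym2.eq_swap]; exact h1, h3, h2⟩⟩⟩
  loopless := ⟨fun a h => h.1 rfl⟩

/-- A tour of the graph `G^U` obtained from `G` by contracting the complement of `U`,
encoded by the multiplicities of the surviving edges of `G` (those with an endpoint in `U`). -/
def IsTourOfContraction (G : SimpleGraph V) (U : Finset V) (F : Sym2 V → ℕ) : Prop :=
  (∀ e : Sym2 V, F e ≠ 0 → e ∈ G.edgeSet ∧ ∃ w, w ∈ e ∧ w ∈ U) ∧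
  (∀ u ∈ U, Even (multiDeg F u)) ∧
  Even (∑ u ∈ U, ∑ w ∈ Uᶜ, F s(u, w)) ∧
  (quotGraph U F).Connected

/-- The number of critical cuts of the support graph of `x`. -/
def criticalCutCount (x : Sym2 V → ℝ) : ℕ :=
  Set.ncard {U : Finset V | IsCriticalCut x U}

/-!
Pulling back along the contraction `V → V^U` turns a critical cut `W` of `G_x^U` into a critical
cut of `G_x`. A support edge crossing the preimage of `W` has an endpoint in `U`, and the
contraction never merges two such edges, because the three edges of `δ(U)` have distinct
endpoints in `U`; hence the crossing edges, with their weights, correspond bijectively. The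
pull-back is injective as the contraction is onto, and it returns `U` only for the cut whose
complement is the single pseudovertex, which is too small to be critical.
-/

lemma mk_mem_crossEdges_iff {S : Finset V} {u v : V} :
    s(u, v) ∈ crossEdges S ↔ (u ∈ S ∧ v ∉ S) ∨ (v ∈ S ∧ u ∉ S) := by
  simp only [crossEdges, Finset.mem_filter, Finset.mem_univ, true_and, Sym2.eq_iff]
  constructor
  · rintro ⟨a, b, ⟨rfl, rfl⟩ | ⟨rfl, rfl⟩, ha, hb⟩
    exacts [Or.inl ⟨ha, hb⟩, Or.inr ⟨ha, hb⟩]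
  · rintro (⟨hu, hv⟩ | ⟨hv, hu⟩)
    exacts [⟨u, v, Or.inl ⟨rfl, rfl⟩, hu, hv⟩, ⟨v, u, Or.inr ⟨rfl, rfl⟩, hv, hu⟩]

lemma mem_crossEdges {S : Finset V} {e : Sym2 V} :
    e ∈ crossEdges S ↔ ∃ u v : V, e = s(u, v) ∧ u ∈ S ∧ v ∉ S := by
  simp [crossEdges]

lemma not_isDiag_of_mem_crossEdges {S : Finset V} {e : Sym2 V} (he : e ∈ crossEdges S) :
    ¬e.IsDiag := by
  obtain ⟨u, v, rfl, hu, hv⟩ := mem_crossEdges.mp he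
  exact fun h => hv (Sym2.mk_isDiag_iff.mp h ▸ hu)

lemma mem_crossEdges_preimage_iff {β : Type*} [Fintype β] [DecidableEq β] (f : V → β)
    (W : Finset β) (e : Sym2 V) :
    e ∈ crossEdges (Finset.univ.filter fun v => f v ∈ W) ↔ Sym2.map f e ∈ crossEdges W := by
  induction e using Sym2.ind with
  | _ u v => simp only [Sym2.map_mk, mk_mem_crossEdges_iff, Finset.mem_filter,
      Finset.mem_univ, true_and]

lemma mem_cutEdges {x : Sym2 V → ℝ} {S : Finset V} {e : Sym2 V} :
    e ∈ cutEdges x S ↔ e ∈ crossEdges S ∧ 0 < x e :=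
  Finset.mem_filter

section Contraction

variable {U : Finset V}

omit [Fintype V] in
lemma contractMap_of_mem {w : V} (h : w ∈ U) : contractMap U w = some ⟨w, h⟩ := dif_pos h

omit [Fintype V] in
lemma contractMap_of_notMem {w : V} (h : w ∉ U) : contractMap U w = none := dif_neg h

omit [Fintype V] in
lemma contractMap_eq_none_iff {w : V} : contractMap U w = none ↔ w ∉ U := by
  by_cases h : w ∈ U <;> simp [h, contractMap_of_mem, contractMap_of_notMem]

omit [Fintype V] in
lemma contractMap_eq_contractMap_iff {a b : V} :
    contractMap U a = contractMap U b ↔ a = b ∨ (a ∉ U ∧ b ∉ U) := by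
  by_cases ha : a ∈ U <;> by_cases hb : b ∈ U <;>
    simp [ha, hb, contractMap_of_mem, contractMap_of_notMem] <;> rintro rfl <;> contradiction

lemma contractMap_surjective (hU : Uᶜ.Nonempty) : Function.Surjective (contractMap U) := by
  obtain ⟨w, hw⟩ := hU
  rintro (_ | ⟨a, ha⟩)
  exacts [⟨w, contractMap_of_notMem (Finset.mem_compl.mp hw)⟩, ⟨a, contractMap_of_mem ha⟩]

def liftCut (U : Finset V) (W : Finset (Contracted U)) : Finset V :=
  Finset.univ.filter fun v => contractMap U v ∈ W

lemma mem_liftCut {W : Finset (Contracted U)} {v : V} :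
    v ∈ liftCut U W ↔ contractMap U v ∈ W := by
  simp [liftCut]

lemma compl_liftCut (W : Finset (Contracted U)) : (liftCut U W)ᶜ = liftCut U Wᶜ := by
  ext v
  simp [mem_liftCut]

lemma liftCut_compl_none : liftCut U {none}ᶜ = U := by
  ext v
  simp [mem_liftCut, contractMap_eq_none_iff]

lemma card_le_card_liftCut (hU : Uᶜ.Nonempty) (W : Finset (Contracted U)) :
    W.card ≤ (liftCut U W).card :=
  Finset.card_le_card_of_surjOn (contractMap U) fun a (ha : a ∈ W) => by
    obtain ⟨v, rfl⟩ := contractMap_surjective hU a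
    exact ⟨v, mem_liftCut.mpr ha, rfl⟩

lemma liftCut_injective (hU : Uᶜ.Nonempty) : Function.Injective (liftCut U) := by
  intro W W' h
  have h' : contractMap U ⁻¹' W = contractMap U ⁻¹' W' := by
    ext v
    simp only [Set.mem_preimage, Finset.mem_coe, ← mem_liftCut, h]
  exact_mod_cast Set.preimage_injective.mpr (contractMap_surjective hU) h'

section CutCorrespondence

variable {x : Sym2 V → ℝ} {W : Finset (Contracted U)}

lemma mem_cutEdges_liftCut_iff {e : Sym2 V} :
    e ∈ cutEdges x (liftCut U W) ↔ Sym2.map (contractMap U) e ∈ crossEdges W ∧ 0 < x e := by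
  rw [mem_cutEdges, liftCut, mem_crossEdges_preimage_iff]

lemma mem_cutEdges_contractPoint_iff (hx0 : ∀ e, 0 ≤ x e) {d : Sym2 (Contracted U)} :
    d ∈ cutEdges (contractPoint x U) W ↔
      ∃ e ∈ cutEdges x (liftCut U W), Sym2.map (contractMap U) e = d := by
  rw [mem_cutEdges]
  simp only [mem_cutEdges_liftCut_iff]
  constructor
  · rintro ⟨hd, hpos⟩
    rw [contractPoint, if_neg (not_isDiag_of_mem_crossEdges hd),
      Finset.sum_pos_iff_of_nonneg fun e _ => hx0 e] at hpos
    obtain ⟨e, he, hxe⟩ := hpos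
    have hed := (Finset.mem_filter.mp he).2
    exact ⟨e, ⟨hed ▸ hd, hxe⟩, hed⟩
  · rintro ⟨e, ⟨hd, hxe⟩, rfl⟩
    refine ⟨hd, ?_⟩
    rw [contractPoint, if_neg (not_isDiag_of_mem_crossEdges hd)]
    exact (Finset.sum_pos_iff_of_nonneg fun e _ => hx0 e).mpr ⟨e, by simp, hxe⟩

lemma injOn_map_cutEdges_liftCut
    (hU : (cutEdges x U : Set (Sym2 V)).Pairwise fun e f => ∀ w ∈ e, w ∉ f) :
    Set.InjOn (Sym2.map (contractMap U)) (cutEdges x (liftCut U W)) := by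
  have eq_of_common_endpoint : ∀ u v v' : V, u ∈ U → v ∉ U → v' ∉ U →
      0 < x s(u, v) → 0 < x s(u, v') → s(u, v) = s(u, v') := fun u v v' hu hv hv' h h' => by
    by_contra hne
    exact hU (mem_cutEdges.mpr ⟨mk_mem_crossEdges_iff.mpr (Or.inl ⟨hu, hv⟩), h⟩)
      (mem_cutEdges.mpr ⟨mk_mem_crossEdges_iff.mpr (Or.inl ⟨hu, hv'⟩), h'⟩) hne u
      (Sym2.mem_mk_left u v) (Sym2.mem_mk_left u v')
  intro e he f hf hef
  have mem_of_notMem : ∀ {a b : V}, contractMap U a ∈ W → contractMap U b ∉ W → a ∉ U → b ∈ U :=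
    fun haW hbW ha => by
      by_contra hb
      exact hbW (contractMap_eq_contractMap_iff.mpr (Or.inr ⟨ha, hb⟩) ▸ haW)
  obtain ⟨hu_v, hxe⟩ := mem_cutEdges.mp he
  obtain ⟨hu'_v', hxf⟩ := mem_cutEdges.mp hf
  obtain ⟨u, v, rfl, hu, hv⟩ := mem_crossEdges.mp hu_v
  obtain ⟨u', v', rfl, hu', hv'⟩ := mem_crossEdges.mp hu'_v'
  rw [mem_liftCut] at hu hv hu' hv'
  rw [Sym2.map_mk, Sym2.map_mk, Sym2.eq_iff, contractMap_eq_contractMap_iff,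
    contractMap_eq_contractMap_iff] at hef
  rcases hef with ⟨rfl | ⟨hu₀, hu₀'⟩, rfl | ⟨hv₀, hv₀'⟩⟩ | ⟨h₁, -⟩
  · rfl
  · have huU : u ∈ U := by
      by_contra hu₀
      exact hv₀ (mem_of_notMem hu hv hu₀)
    exact eq_of_common_endpoint u v v' huU hv₀ hv₀' hxe hxf
  · rw [Sym2.eq_swap, Sym2.eq_swap (a := u')]
    exact eq_of_common_endpoint v u u' (mem_of_notMem hu hv hu₀) hu₀ hu₀'
      (by rwa [Sym2.eq_swap]) (by rwa [Sym2.eq_swap])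
  · exact absurd (mem_of_notMem hu hv hu₀) hv₀
  · exact (hv' (h₁ ▸ hu)).elim

lemma contractPoint_map_of_mem_cutEdges (hx0 : ∀ e, 0 ≤ x e)
    (hU : (cutEdges x U : Set (Sym2 V)).Pairwise fun e f => ∀ w ∈ e, w ∉ f)
    {e : Sym2 V} (he : e ∈ cutEdges x (liftCut U W)) :
    contractPoint x U (Sym2.map (contractMap U) e) = x e := by
  have hcross := (mem_cutEdges_liftCut_iff.mp he).1
  rw [contractPoint, if_neg (not_isDiag_of_mem_crossEdges hcross)]
  refine Finset.sum_eq_single_of_mem e (by simp) fun g hg hge => ?_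
  have hgd := (Finset.mem_filter.mp hg).2
  by_contra hg0
  have hg : g ∈ cutEdges x (liftCut U W) :=
    mem_cutEdges_liftCut_iff.mpr ⟨hgd ▸ hcross, (hx0 g).lt_of_ne' hg0⟩
  exact hge (injOn_map_cutEdges_liftCut hU hg he hgd)

lemma card_filter_cutEdges_liftCut (hx0 : ∀ e, 0 ≤ x e)
    (hU : (cutEdges x U : Set (Sym2 V)).Pairwise fun e f => ∀ w ∈ e, w ∉ f)
    (p : ℝ → Prop) [DecidablePred p] :
    ((cutEdges x (liftCut U W)).filter fun e => p (x e)).card =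
      ((cutEdges (contractPoint x U) W).filter fun d => p (contractPoint x U d)).card := by
  refine Finset.card_nbij (Sym2.map (contractMap U)) (fun e he => ?_)
    ((injOn_map_cutEdges_liftCut (W := W) hU).mono
      (Finset.coe_subset.mpr (Finset.filter_subset _ _))) (fun d hd => ?_)
  · obtain ⟨he, hpe⟩ := Finset.mem_filter.mp he
    exact Finset.mem_filter.mpr ⟨(mem_cutEdges_contractPoint_iff hx0).mpr ⟨e, he, rfl⟩,
      (contractPoint_map_of_mem_cutEdges hx0 hU he).symm ▸ hpe⟩
  · obtain ⟨hd, hpd⟩ := Finset.mem_filter.mp hd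
    obtain ⟨e, he, rfl⟩ := (mem_cutEdges_contractPoint_iff hx0).mp hd
    exact ⟨e, Finset.mem_filter.mpr ⟨he, contractPoint_map_of_mem_cutEdges hx0 hU he ▸ hpd⟩, rfl⟩

lemma card_cutEdges_liftCut (hx0 : ∀ e, 0 ≤ x e)
    (hU : (cutEdges x U : Set (Sym2 V)).Pairwise fun e f => ∀ w ∈ e, w ∉ f) :
    (cutEdges x (liftCut U W)).card = (cutEdges (contractPoint x U) W).card := by
  simpa using card_filter_cutEdges_liftCut hx0 hU (W := W) fun _ => True

lemma isCriticalCut_liftCut (hx0 : ∀ e, 0 ≤ x e) (hU : IsCriticalCut x U)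
    (hW : IsCriticalCut (contractPoint x U) W) : IsCriticalCut x (liftCut U W) := by
  obtain ⟨hW₂, hWc₂, hW₃, hW₁, hWdisj⟩ := hW
  have hUc : Uᶜ.Nonempty := Finset.card_pos.mp (by have := hU.2.1; omega)
  have hUdisj : (cutEdges x U : Set (Sym2 V)).Pairwise fun e f => ∀ w ∈ e, w ∉ f :=
    fun e he f hf => hU.2.2.2.2 e he f hf
  refine ⟨hW₂.trans (card_le_card_liftCut hUc W), ?_, ?_, ?_, ?_⟩
  · rw [compl_liftCut]
    exact hWc₂.trans (card_le_card_liftCut hUc Wᶜ)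
  · rwa [card_cutEdges_liftCut hx0 hUdisj]
  · rwa [card_filter_cutEdges_liftCut hx0 hUdisj fun r => r = 1]
  · intro e he f hf hef w hwe hwf
    exact hWdisj _ ((mem_cutEdges_contractPoint_iff hx0).mpr ⟨e, he, rfl⟩)
      _ ((mem_cutEdges_contractPoint_iff hx0).mpr ⟨f, hf, rfl⟩)
      (fun h => hef (injOn_map_cutEdges_liftCut hUdisj he hf h)) (contractMap U w)
      (Sym2.mem_map.mpr ⟨w, hwe, rfl⟩) (Sym2.mem_map.mpr ⟨w, hwf, rfl⟩)

end CutCorrespondence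

lemma liftCut_ne_self (hU : Uᶜ.Nonempty) {W : Finset (Contracted U)}
    (hW : 2 ≤ Wᶜ.card) : liftCut U W ≠ U := by
  intro h
  have hWnone : W = {none}ᶜ := liftCut_injective hU (h.trans liftCut_compl_none.symm)
  rw [hWnone, compl_compl, Finset.card_singleton] at hW
  omega

end Contraction

theorem statement11_general (n : ℕ) (θ : ℝ) (x : Sym2 (Fin n) → ℝ)
    (hx : IsCyclic θ x)
    (k : ℕ) (hk : criticalCutCount x = k)
    (U : Finset (Fin n)) (hcrit : IsCriticalCut x U) :
    criticalCutCount (contractPoint x U) ≤ k - 1 := by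
  subst hk
  have hx0 : ∀ e, 0 ≤ x e := hx.2.2.1.2.1
  have hUc : Uᶜ.Nonempty := Finset.card_pos.mp (by have := hcrit.2.1; omega)
  calc criticalCutCount (contractPoint x U)
      ≤ ({S | IsCriticalCut x S} \ {U} : Set (Finset (Fin n))).ncard :=
        Set.ncard_le_ncard_of_injOn (liftCut U)
          (fun W hW => ⟨isCriticalCut_liftCut hx0 hcrit hW, liftCut_ne_self hUc hW.2.1⟩)
          (liftCut_injective hUc).injOn (Set.toFinite _)
    _ = criticalCutCount x - 1 := Set.ncard_sdiff_singleton_of_mem hcrit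

/-- Observation `obs:inductivecriticalcut`. If `G_x` has exactly `k` critical
cuts and `U` is one of them, then `G_x^U` has at most `k − 1` critical cuts. -/
theorem statement11 (n : ℕ) (hn : 3 ≤ n) (θ : ℝ) (x : Sym2 (Fin n) → ℝ)
    (hx : IsCyclic θ x) (hcubic : ∀ v : Fin n, suppDeg x v = 3)
    (k : ℕ) (hk : criticalCutCount x = k)
    (U : Finset (Fin n)) (hcrit : IsCriticalCut x U) :
    criticalCutCount (contractPoint x U) ≤ k - 1 :=
  statement11_general n θ x hx k hk U hcrit

end TSPPaper
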